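/- For positive semidefinite Hermitian matrices A, B of order n with A positive semidefinite, the norm bound ‖(B - γA)_+‖ ≤ ‖B‖ holds for every γ ≥ 0, where ‖·‖ is the operator norm. -/

import Mathlib

/-! Since `A ≥ 0`, we have `B - γA ≤ B ≤ ‖B‖ • 1` in the Loewner order, so the spectrum of
`B - γA` lies below `‖B‖`. The positive part therefore has spectrum in `[0, ‖B‖]`, and in a
C⋆-algebra the norm of a self-adjoint element is its spectral radius. -/

open Matrix
open scoped ComplexOrder Matrix.Norms.L2Operator

/-- The positive part `T₊` of a Hermitian matrix. -/
noncomputable def matPosPart {n : ℕ} (T : Matrix (Fin n) (Fin n) ℂ) : Matrix (Fin n) (Fin n) ℂ :=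
  cfc (fun x : ℝ => max x 0) T

theorem norm_cfc_max_zero_le_norm_of_le {A : Type*} [CStarAlgebra A] [PartialOrder A]
    [StarOrderedRing A] {a b : A} (hab : a ≤ b) (hb : IsSelfAdjoint b) :
    ‖cfc (fun x : ℝ => max x 0) a‖ ≤ ‖b‖ := by
  have ha : IsSelfAdjoint a := by
    simpa using hb.sub (sub_nonneg.mpr hab).isSelfAdjoint
  have hspec : ∀ x ∈ spectrum ℝ a, x ≤ ‖b‖ :=
    (le_algebraMap_iff_spectrum_le ha).mp (hab.trans hb.le_algebraMap_norm_self)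
  refine norm_cfc_le (norm_nonneg b) fun x hx => ?_
  rw [Real.norm_of_nonneg (le_max_right x 0)]
  exact max_le (hspec x hx) (norm_nonneg b)

open scoped MatrixOrder

/-- for positive semidefinite Hermitian `A, B`, `‖(B - γA)₊‖ ≤ ‖B‖` for every
`γ ≥ 0`, where `‖·‖` is the operator norm. -/
theorem posPart_norm_bound {n : ℕ} (A B : Matrix (Fin n) (Fin n) ℂ)
    (hA : A.PosSemidef) (hB : B.PosSemidef) :
    ∀ γ : ℝ, 0 ≤ γ → ‖matPosPart (B - γ • A)‖ ≤ ‖B‖ := by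
  intro γ hγ
  have hle : B - γ • A ≤ B := sub_le_self B (smul_nonneg hγ hA.nonneg)
  exact norm_cfc_max_zero_le_norm_of_le hle hB.isHermitian
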